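/- arXiv:1409.0971 — 2 statements merged into one kernel-verified Lean document; each statement's English description precedes it below -/
import Mathlib

section
/- Let k_1 ≥ 3 be an odd integer and g an integer. If (g + 3k_1 + 3, 2k_1 + 4) ∈ T2 and L(g + 3k_1 + 3, 2k_1 + 4) < 0, then (g, 2k_1+1) ∈ S3. (This is the precise form of the correspondence in Corollary 'final2' between S3 and T2 under the shift (g,k) ↦ (g + 3(k+1)/2, k+3) of construction 3: every pair of T2 with L < 0 arises from a pair of S3.) -/
/-- `L(g,k)` for even `k = 2k₁`: `L = 2g − 2k₁²`. -/
def Leven (g k1 : ℤ) : ℤ := 2 * g - 2 * k1 ^ 2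

/-- `S3 = {(g,k) : k = 2k₁+1 ≥ 7, k ≡ 3 (mod 4), k₁²+k₁−⌊((k₁−2)²+3)/12⌋ ≤ g ≤ k₁²+k₁}`. -/
def S3 : Set (ℤ × ℤ) :=
  {p | ∃ g k1 : ℤ, p = (g, 2 * k1 + 1) ∧ 7 ≤ 2 * k1 + 1 ∧ (2 * k1 + 1) % 4 = 3 ∧
    k1 ^ 2 + k1 - ((k1 - 2) ^ 2 + 3) / 12 ≤ g ∧ g ≤ k1 ^ 2 + k1}

/-- `T2 = {(g,k) : k = 2k₁ ≥ 10, k ≡ 2 (mod 4), k₁²−1−⌊(k₁−4)²/12⌋ ≤ g ≤ k₁²+k₁}`. -/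
def T2 : Set (ℤ × ℤ) :=
  {p | ∃ g k1 : ℤ, p = (g, 2 * k1) ∧ 10 ≤ 2 * k1 ∧ (2 * k1) % 4 = 2 ∧
    k1 ^ 2 - 1 - (k1 - 4) ^ 2 / 12 ≤ g ∧ g ≤ k1 ^ 2 + k1}

theorem mem_T2_iff {g k : ℤ} :
    (g, 2 * k) ∈ T2 ↔ 5 ≤ k ∧ k % 2 = 1 ∧ k ^ 2 - 1 - (k - 4) ^ 2 / 12 ≤ g ∧ g ≤ k ^ 2 + k := by
  constructor
  · rintro ⟨g', k', heq, hk, hmod, hlo, hhi⟩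
    obtain ⟨rfl, hkk⟩ := Prod.ext_iff.mp heq
    obtain rfl : k' = k := by omega
    exact ⟨by omega, by omega, hlo, hhi⟩
  · rintro ⟨hk, hmod, hlo, hhi⟩
    exact ⟨g, k, rfl, by omega, by omega, hlo, hhi⟩

theorem mem_S3_iff {g k : ℤ} :
    (g, 2 * k + 1) ∈ S3 ↔
      3 ≤ k ∧ k % 2 = 1 ∧ k ^ 2 + k - ((k - 2) ^ 2 + 3) / 12 ≤ g ∧ g ≤ k ^ 2 + k := by
  constructor
  · rintro ⟨g', k', heq, hk, hmod, hlo, hhi⟩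
    obtain ⟨rfl, hkk⟩ := Prod.ext_iff.mp heq
    obtain rfl : k' = k := by omega
    exact ⟨by omega, by omega, hlo, hhi⟩
  · rintro ⟨hk, hmod, hlo, hhi⟩
    exact ⟨g, k, rfl, by omega, by omega, hlo, hhi⟩

theorem Leven_neg_iff {g k : ℤ} : Leven g k < 0 ↔ g < k ^ 2 := by
  unfold Leven
  omega

theorem mem_S3_of_shift_mem_T2_general (k1 g : ℤ)
    (hT2 : (g + 3 * k1 + 3, 2 * k1 + 4) ∈ T2)
    (hL : Leven (g + 3 * k1 + 3) (k1 + 2) < 0) :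
    (g, 2 * k1 + 1) ∈ S3 := by
  rw [show 2 * k1 + 4 = 2 * (k1 + 2) by ring, mem_T2_iff, show k1 + 2 - 4 = k1 - 2 by ring]
    at hT2
  obtain ⟨hk, hodd, hlo, -⟩ := hT2
  have hfloor : (k1 - 2) ^ 2 / 12 ≤ ((k1 - 2) ^ 2 + 3) / 12 :=
    Int.ediv_le_ediv (by norm_num) (by linarith)
  have hupper := Leven_neg_iff.mp hL
  refine mem_S3_iff.mpr ⟨by omega, by omega, ?_, ?_⟩ <;> linarith

/-- Let `k₁ ≥ 3` be an odd integer and `g` an integer.  If `(g + 3k₁ + 3, 2k₁ + 4) ∈ T2`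
and `L(g + 3k₁ + 3, 2k₁ + 4) < 0` (where `2k₁ + 4 = 2(k₁+2)` is even, so `L` is computed
with the even-parity convention), then `(g, 2k₁+1) ∈ S3`. -/
theorem mem_S3_of_shift_mem_T2 (k1 g : ℤ) (hk1 : 3 ≤ k1) (hodd : Odd k1)
    (hT2 : (g + 3 * k1 + 3, 2 * k1 + 4) ∈ T2)
    (hL : Leven (g + 3 * k1 + 3) (k1 + 2) < 0) :
    (g, 2 * k1 + 1) ∈ S3 :=
  mem_S3_of_shift_mem_T2_general k1 g hT2 hL
end

section
/- Let c be a (k+n)×(2g-2) integer matrix satisfying conditions (C1)-(C6) and let j ∈ {1,...,g} be an index with d_j even (i.e. j ∉ {j_1,...,j_{2T}}). Write e = c_{k+1, 2j-2} and f = c_{k+1, 2j-1}. If the number of indices t with j_t < j is even, then (c_{i,2j-2}) for i = k+1,...,k+n equals (e, e+1, e+1, ..., e+m-1, e+m-1, e+m) and (c_{i,2j-1}) for i = k+1,...,k+n equals (f, f-1, f-1, ..., f-m+1, f-m+1, f-m); if that number is odd, then (c_{i,2j-2}) for i = k+1,...,k+n equals (e, e, e+1, e+1, ..., e+m-1, e+m-1)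 and (c_{i,2j-1}) for i = k+1,...,k+n equals (f, f, f-1, f-1, ..., f-m+1, f-m+1). (This is Lemma A.4 of the appendix describing the pattern of the new rows of c^Γ at the columns of even componentwise degree.) -/
namespace BFM

/-- The sequence `a(k) = (0,0,1,1,…,k₁−1,k₁−1,k₁)`, indexed from `1`:
its `i`-th entry is `⌊(i−1)/2⌋`. -/
def seqA (i : ℤ) : ℤ := (i - 1) / 2

/-- The number of indices `i ∈ {1,…,K}` with `a i = x` (the multiplicity of `x` in the
sequence `a` of length `K`). -/
noncomputable def multCount (K : ℤ) (a : ℤ → ℤ) (x : ℤ) : ℕ :=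
  ((Finset.Icc (1 : ℤ) K).filter fun i => a i = x).card

/-- `(i₁, i₂)` is a pair of special indices for the pair of sequences `(a, b)` of length
`K` with respect to `d`: `i₁ < i₂` and both row sums equal `d`. -/
def IsSpecialPair (K d : ℤ) (a b : ℤ → ℤ) (i1 i2 : ℤ) : Prop :=
  1 ≤ i1 ∧ i1 < i2 ∧ i2 ≤ K ∧ a i1 + b i1 = d ∧ a i2 + b i2 = d

/-- Condition (I) for a nondecreasing sequence `a` and a nonincreasing sequence `b`, both
of length `K` (indices `1,…,K`), with respect to `d`. -/
structure CondI (K d : ℤ) (a b : ℤ → ℤ) : Prop where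
  mono : ∀ i i', 1 ≤ i → i ≤ i' → i' ≤ K → a i ≤ a i'
  anti : ∀ i i', 1 ≤ i → i ≤ i' → i' ≤ K → b i' ≤ b i
  sum_le : ∀ i, 1 ≤ i → i ≤ K → a i + b i ≤ d
  le_sum : ∀ i, 1 ≤ i → i ≤ K → d - 1 ≤ a i + b i
  special : ∃! p : ℤ × ℤ, IsSpecialPair K d a b p.1 p.2
  a_mult : ∀ x : ℤ, multCount K a x ≤ 2
  b_mult : ∀ x : ℤ, multCount K b x ≤ 2
  no_extra : ∀ i1 i2, IsSpecialPair K d a b i1 i2 →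
    ∀ i, 1 ≤ i → i ≤ K → i ≠ i1 → i ≠ i2 → ¬(a i = a i1 ∧ b i = b i2)

/-- Condition (II) for a nondecreasing sequence `a` and a nonincreasing sequence `b`, both
of length `K` (indices `1,…,K`), with respect to `d`. -/
structure CondII (K d : ℤ) (a b : ℤ → ℤ) : Prop where
  mono : ∀ i i', 1 ≤ i → i ≤ i' → i' ≤ K → a i ≤ a i'
  anti : ∀ i i', 1 ≤ i → i ≤ i' → i' ≤ K → b i' ≤ b i
  sum_le : ∀ i, 1 ≤ i → i ≤ K → a i + b i ≤ d + 1
  le_sum : ∀ i, 1 ≤ i → i ≤ K → d - 1 ≤ a i + b i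
  exists_ell : ∃ l, 1 ≤ l ∧ l ≤ K ∧ a l + b l = d + 1
  a_mult : ∀ x : ℤ, multCount K a x ≤ 2
  b_mult : ∀ x : ℤ, multCount K b x ≤ 2
  exists_istar : ∃ istar, 1 ≤ istar ∧ istar < K ∧ a istar = a (istar + 1) ∧
    a istar + b istar = d ∧ a (istar + 1) + b (istar + 1) = d ∧
    (∀ x y : ℤ, (x, y) ≠ (a istar, b istar) →
      ((Finset.Icc (1 : ℤ) K).filter fun i => a i = x ∧ b i = y).card ≤ 1) ∧
    (∀ x : ℤ, (x, d - x) ≠ (a istar, b istar) →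
      ((Finset.Icc (1 : ℤ) K).filter fun i => x ≤ a i ∧ d - x ≤ b i).card ≤ 1)
  no_consec : ¬ ∃ i, 1 ≤ i ∧ i + 1 ≤ K ∧
    a i + b i = d - 1 ∧ a (i + 1) + b (i + 1) = d - 1 ∧ a (i + 1) = a i + 1 ∧
    multCount K a (a i) = 1 ∧ multCount K a (a (i + 1)) = 1 ∧
    multCount K b (b i) = 1 ∧ multCount K b (b (i + 1)) = 1

/-- The data of the inductive construction of Lemma C1 / Proposition A.1: the parameters
`k₁, g, m, N, T`, the componentwise degrees `d`, the positions `jpos` of the odd degrees,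
and the `k×(2g−2)` matrix `a` of prescribed vanishing orders. -/
structure StdData where
  k1 : ℤ
  g : ℤ
  m : ℤ
  N : ℤ
  T : ℤ
  d : ℤ → ℤ
  jpos : ℤ → ℤ
  a : ℤ → ℤ → ℤ

namespace StdData

variable (S : StdData)

/-- `k = 2k₁ + 1`. -/
def k : ℤ := 2 * S.k1 + 1

/-- `n = 2m`. -/
def n : ℤ := 2 * S.m

/-- `d̂ⱼ = dⱼ + 2N`. -/
def dhat (j : ℤ) : ℤ := S.d j + 2 * S.N

/-- The matrix `a` extended by the boundary columns: column `0` is `a(k)` and column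
`2g−1` is the reverse of `a(k)`. -/
def aext (i j : ℤ) : ℤ :=
  if j = 0 then seqA i
  else if j = 2 * S.g - 1 then seqA (2 * S.k1 + 2 - i)
  else S.a i j

/-- `j_{t+1}`, with the convention that beyond `t = 2T` it is `g + 1`. -/
def jnext (t : ℤ) : ℤ := if t < 2 * S.T then S.jpos (t + 1) else S.g + 1

/-- The prescribed boundary column `c_{•,2g−1}` of length `k + n`:
`(N+k₁, N+k₁−1, N+k₁−1, …, N, N, N−1−k₁, N−2−k₁, N−2−k₁, …, N−m−k₁, N−m−k₁, N−m−k₁−1)`. -/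
def lastCol (i : ℤ) : ℤ :=
  if i ≤ 2 * S.k1 + 1 then S.N + S.k1 - i / 2
  else S.N - 1 - S.k1 - (i - (2 * S.k1 + 1)) / 2

/-- A `(k+n)×(2g−2)` matrix `c` extended by the boundary columns: column `0` is `a(k+n)`
and column `2g−1` is `lastCol`. -/
def cext (c : ℤ → ℤ → ℤ) (i j : ℤ) : ℤ :=
  if j = 0 then seqA i
  else if j = 2 * S.g - 1 then S.lastCol i
  else c i j

/-- The number of `t ∈ {1,…,2T}` with `j_t < j`. -/
noncomputable def oddCountBelow (j : ℤ) : ℕ :=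
  ((Finset.Icc (1 : ℤ) (2 * S.T)).filter fun t => S.jpos t < j).card

/-- The hypothesis package: the constraints on the parameters and the componentwise
degrees, together with `(g,k)`-standardness (s1)–(s6) of the matrix `a`. -/
structure Std : Prop where
  hk1 : 2 ≤ S.k1
  hg : 3 ≤ S.g
  hm : 1 ≤ S.m
  hN : S.k1 + S.m < S.N
  hT : 1 ≤ S.T
  hd_mem : ∀ j, 1 ≤ j → j ≤ S.g →
    S.d j = 2 * S.g - 3 ∨ S.d j = 2 * S.g - 2 ∨ S.d j = 2 * S.g - 1
  hd_one : S.d 1 = 2 * S.g - 2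
  hd_g : S.d S.g = 2 * S.g - 2
  hj_mono : ∀ t t', 1 ≤ t → t < t' → t' ≤ 2 * S.T → S.jpos t < S.jpos t'
  hj_range : ∀ t, 1 ≤ t → t ≤ 2 * S.T → 1 ≤ S.jpos t ∧ S.jpos t ≤ S.g
  hj_one : S.jpos 1 = 2
  hodd_iff : ∀ j, 1 ≤ j → j ≤ S.g →
    (Odd (S.d j) ↔ ∃ t, 1 ≤ t ∧ t ≤ 2 * S.T ∧ S.jpos t = j)
  hd_odd : ∀ s, 1 ≤ s → s ≤ S.T →
    S.d (S.jpos (2 * s - 1)) = 2 * S.g - 1 ∧ S.d (S.jpos (2 * s)) = 2 * S.g - 3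
  ha_nonneg : ∀ i j, 1 ≤ i → i ≤ S.k → 1 ≤ j → j ≤ 2 * S.g - 2 → 0 ≤ S.a i j
  hs1 : ∀ i j, 1 ≤ i → i ≤ S.k → 1 ≤ j → j ≤ S.g - 1 →
    S.a i (2 * j - 1) + S.a i (2 * j) = S.g - 1
  hs2 : ∀ j, 1 ≤ j → j ≤ S.g → S.d j = 2 * S.g - 2 →
    CondI S.k (S.g - 1) (fun i => S.aext i (2 * j - 2)) (fun i => S.aext i (2 * j - 1))
  hs3a : ∀ j, 1 ≤ j → j ≤ S.g → S.d j = 2 * S.g - 1 →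
    CondII S.k (S.g - 1) (fun i => S.aext i (2 * j - 2)) (fun i => S.aext i (2 * j - 1))
  hs3b : ∀ j, 1 ≤ j → j ≤ S.g → S.d j = 2 * S.g - 3 →
    CondII S.k (S.g - 2) (fun i => S.aext i (2 * j - 2)) (fun i => S.aext i (2 * j - 1))
  hs4 : S.a S.k 2 + S.a S.k 3 = S.g - 1
  hs5 : ∀ t, 1 ≤ t → t ≤ 2 * S.T →
    S.aext S.k (2 * S.jpos t - 2) ≤ S.k1 + S.jpos t - 1 ∧
    (S.aext S.k (2 * S.jpos t - 2) = S.k1 + S.jpos t - 2 →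
      Even t ∨
        S.aext S.k (2 * S.jpos t - 2) + S.aext S.k (2 * S.jpos t - 1) =
          (S.d (S.jpos t) - 1) / 2) ∧
    (S.aext S.k (2 * S.jpos t - 2) = S.k1 + S.jpos t - 1 →
      Odd t ∧ S.aext (S.k - 1) (2 * S.jpos t - 2) < S.aext S.k (2 * S.jpos t - 2))
  hs6 : ∀ t, 1 ≤ t → t ≤ 2 * S.T →
    S.aext S.k (2 * S.jpos t - 1) = S.g - 1 - S.k1 - S.jpos t →
    ∀ j, S.jpos t < j → j < S.jnext t →
      S.aext S.k (2 * j - 2) + S.aext S.k (2 * j - 1) = S.g - 2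

/-- Conditions (C1)–(C6) on a `(k+n)×(2g−2)` integer matrix `c`. -/
def CondC (c : ℤ → ℤ → ℤ) : Prop :=
  -- (C1): the first k rows of c equal â, i.e. a with N added in every odd-indexed column
  (∀ i j, 1 ≤ i → i ≤ S.k → 1 ≤ j → j ≤ 2 * S.g - 2 →
    c i j = S.a i j + if Odd j then S.N else 0) ∧
  -- (C2)
  (∀ i j, 1 ≤ i → i ≤ S.k + S.n → 1 ≤ j → j ≤ S.g - 1 →
    c i (2 * j - 1) + c i (2 * j) = S.g + S.N - 1) ∧
  -- (C3)
  (∀ j, 1 ≤ j → j ≤ S.g → Even (S.d j) →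
    CondI (S.k + S.n) (S.dhat j / 2)
      (fun i => S.cext c i (2 * j - 2)) (fun i => S.cext c i (2 * j - 1))) ∧
  -- (C4)
  (∀ j, 1 ≤ j → j ≤ S.g → Odd (S.d j) →
    CondII (S.k + S.n) ((S.dhat j - 1) / 2)
      (fun i => S.cext c i (2 * j - 2)) (fun i => S.cext c i (2 * j - 1))) ∧
  -- (C5)
  (∀ i t, S.k + 1 ≤ i → i ≤ S.k + S.n → 1 ≤ t → t < 2 * S.T →
    (S.cext c i (2 * S.jpos t - 2) + S.cext c i (2 * S.jpos t - 1) =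
        (S.dhat (S.jpos t) - 1) / 2 →
      S.cext c i (2 * S.jpos (t + 1) - 2) + S.cext c i (2 * S.jpos (t + 1) - 1) =
        (S.dhat (S.jpos (t + 1)) - 1) / 2 - 1) ∧
    (S.cext c i (2 * S.jpos t - 2) + S.cext c i (2 * S.jpos t - 1) =
        (S.dhat (S.jpos t) - 1) / 2 - 1 →
      S.cext c i (2 * S.jpos (t + 1) - 2) + S.cext c i (2 * S.jpos (t + 1) - 1) =
        (S.dhat (S.jpos (t + 1)) - 1) / 2)) ∧
  -- (C6)
  c (S.k + S.n) 2 + c (S.k + S.n) 3 = (S.dhat 2 - 1) / 2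

end StdData

/-!
Column `2j` is the complement `g + N - 1 - c_{•,2j-1}` of column `2j-1` by (C2), so passing
from the pair `j` to the pair `j+1` adds `g + N - 1` minus the row sum of the pair `j` to the
entries of the new rows. At an even-degree pair the special pair already lies in the first
`k` rows, so all new rows sum to `g + N - 2` and the step is constant. At `j₁ = 2` the rows of
column `2` climb as a staircase from the last old row, and the counting clauses of (II),
together with (C6), force the row sums to alternate with the parity of the row; (C5) then
propagates this alternation, with a flip of phase, along all odd-degree pairs. Each
odd-degree pair therefore shifts the staircase pattern of the new rows by one row.
-/

open Finset

section Sequences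

variable {K d : ℤ} {a b : ℤ → ℤ}

theorem not_three_of_multCount_le_two {x : ℤ} (h : multCount K a x ≤ 2) {i₁ i₂ i₃ : ℤ}
    (h₁ : 1 ≤ i₁) (h₁₂ : i₁ < i₂) (h₂₃ : i₂ < i₃) (h₃ : i₃ ≤ K) :
    ¬ (a i₁ = x ∧ a i₂ = x ∧ a i₃ = x) := by
  rintro ⟨e₁, e₂, e₃⟩
  refine h.not_gt (two_lt_card_iff.2 ⟨i₁, i₂, i₃, ?_, ?_, ?_, by omega, by omega, by omega⟩) <;>
    simp only [mem_filter, mem_Icc] <;> omega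

theorem CondI.sum_eq_pred_of_ne (h : CondI K d a b) {i₁ i₂ : ℤ}
    (hp : IsSpecialPair K d a b i₁ i₂) {i : ℤ} (hi : 1 ≤ i) (hiK : i ≤ K) (h₁ : i ≠ i₁)
    (h₂ : i ≠ i₂) : a i + b i = d - 1 := by
  obtain ⟨hp₁, hp₁₂, hp₂, hs₁, hs₂⟩ := hp
  have := h.sum_le i hi hiK
  have := h.le_sum i hi hiK
  by_contra hne
  have hs : a i + b i = d := by omega
  rcases lt_or_gt_of_ne h₁ with hlt | hgt
  · have := h.special.unique (y₁ := (i₁, i₂)) (y₂ := (i, i₁))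
      ⟨hp₁, hp₁₂, hp₂, hs₁, hs₂⟩ ⟨hi, hlt, by omega, hs, hs₁⟩
    simp only [Prod.ext_iff] at this
    omega
  · have := h.special.unique (y₁ := (i₁, i₂)) (y₂ := (i₁, i))
      ⟨hp₁, hp₁₂, hp₂, hs₁, hs₂⟩ ⟨hp₁, hgt, hiK, hs₁, hs⟩
    simp only [Prod.ext_iff] at this
    omega

theorem CondI.sum_eq_pred_of_repeat_succ (h : CondI K d a b) {i : ℤ} (hi : 3 ≤ i)
    (hiK : i ≤ K) (hrep : a (i - 2) = a (i - 1)) (hstep : a i = a (i - 1) + 1) :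
    a i + b i = d - 1 := by
  have := h.le_sum i (by omega) hiK
  have := h.sum_le (i - 1) (by omega) (by omega)
  have := h.sum_le (i - 2) (by omega) (by omega)
  have := h.anti (i - 1) i (by omega) (by omega) hiK
  have := h.anti (i - 2) (i - 1) (by omega) (by omega) (by omega)
  by_contra hne
  have hs : a i + b i = d := by have := h.sum_le i (by omega) hiK; omega
  rcases (by omega : b (i - 1) = b i ∨ b (i - 1) = b i + 1) with e | e
  · rcases (by omega : b (i - 2) = b i ∨ b (i - 2) = b i + 1) with e' | e'
    · exact not_three_of_multCount_le_two (h.b_mult (b i)) (by omega) (by omega : i - 2 < i - 1)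
        (by omega) hiK ⟨e', e, rfl⟩
    · exact h.no_extra (i - 2) i ⟨by omega, by omega, hiK, by omega, hs⟩ (i - 1) (by omega)
        (by omega) (by omega) (by omega) ⟨hrep.symm, e⟩
  · have := h.special.unique (y₁ := (i - 2, i - 1)) (y₂ := (i - 1, i))
      (show IsSpecialPair K d a b (i - 2) (i - 1) from
        ⟨by omega, by omega, by omega, by omega, by omega⟩)
      (show IsSpecialPair K d a b (i - 1) i from ⟨by omega, by omega, hiK, by omega, hs⟩)
    simp only [Prod.ext_iff] at this
    omega

/-- A duplicated row of a (II)-pair must be the row `i*`, so away from its `a`-value the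
counting clauses of (II) apply to every value. -/
theorem CondII.ne_and_lt_of_eq_of_ne_dup (h : CondII K d a b) {p : ℤ} (hp : 1 ≤ p)
    (hpK : p < K) (hpa : a p = a (p + 1)) (hpb : b p = b (p + 1)) {i i' : ℤ} (hi : 1 ≤ i)
    (hii' : i < i') (hi'K : i' ≤ K) (hai : a i = a i') (hne : a i ≠ a p) :
    b i ≠ b i' ∧ (a i + b i < d ∨ a i' + b i' < d) := by
  obtain ⟨s, -, -, -, -, -, hpair, hcone⟩ := h.exists_istar
  have hps : (a p, b p) = (a s, b s) := by
    by_contra hps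
    refine (hpair _ _ hps).not_gt (one_lt_card_iff.2 ⟨p, p + 1, ?_, ?_, by omega⟩)
    · exact mem_filter.2 ⟨mem_Icc.2 ⟨hp, hpK.le⟩, rfl, rfl⟩
    · exact mem_filter.2 ⟨mem_Icc.2 ⟨by omega, hpK⟩, hpa.symm, hpb.symm⟩
  have hx : ∀ y, (a i, y) ≠ (a s, b s) := by
    rw [← hps]
    intro y e
    exact hne (Prod.ext_iff.1 e).1
  constructor
  · intro hb
    refine (hpair _ _ (hx (b i))).not_gt (one_lt_card_iff.2 ⟨i, i', ?_, ?_, hii'.ne⟩)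
    · exact mem_filter.2 ⟨mem_Icc.2 ⟨hi, by omega⟩, rfl, rfl⟩
    · exact mem_filter.2 ⟨mem_Icc.2 ⟨by omega, hi'K⟩, hai.symm, hb.symm⟩
  · by_contra! hd
    refine (hcone _ (hx _)).not_gt (one_lt_card_iff.2 ⟨i, i', ?_, ?_, hii'.ne⟩)
    · exact mem_filter.2 ⟨mem_Icc.2 ⟨hi, by omega⟩, le_rfl, by omega⟩
    · exact mem_filter.2 ⟨mem_Icc.2 ⟨by omega, hi'K⟩, hai.le, by omega⟩

theorem CondII.sum_eq_sub_emod_two_of_staircase (h : CondII K d a b) {p K₀ x : ℤ}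
    (hp : 1 ≤ p) (hpK₀ : p < K₀) (hK₀ : K₀ < K) (hpa : a p = a (p + 1))
    (hpb : b p = b (p + 1)) (ha : ∀ i, K₀ ≤ i → i ≤ K → a i = x + (i - K₀) / 2)
    (h₀ : a K₀ + b K₀ = d) (hK : a K + b K = d) :
    ∀ i, K₀ ≤ i → i ≤ K → a i + b i = d - (i - K₀) % 2 := by
  have hpx : a p < x := by
    have := h.mono p K₀ hp hpK₀.le hK₀.le
    have := ha K₀ le_rfl hK₀.le
    have := ha (K₀ + 1) (by omega) (by omega)
    refine lt_of_le_of_ne (by omega) fun e => not_three_of_multCount_le_two (h.a_mult x) hp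
      (lt_add_one p) (by omega : p + 1 < K₀ + 1) (by omega) ⟨e, by omega, by omega⟩
  have sep : ∀ i i', K₀ ≤ i → i < i' → i' ≤ K → a i = a i' →
      b i ≠ b i' ∧ (a i + b i < d ∨ a i' + b i' < d) := fun i i' hi hii' hi'K hai =>
    h.ne_and_lt_of_eq_of_ne_dup hp (by omega) hpa hpb (by omega) hii' hi'K hai
      (by have := ha i hi (by omega); omega)
  have odd : ∀ i, K₀ < i → i ≤ K → (i - K₀) % 2 = 1 → a i + b i = d - 1 := by
    intro i hi hiK hodd
    have := ha i (by omega) hiK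
    have := ha (i - 1) (by omega) (by omega)
    have := h.anti (i - 1) i (by omega) (by omega) hiK
    have := h.le_sum i (by omega) hiK
    have := (sep (i - 1) i (by omega) (by omega) hiK (by omega)).2
    omega
  intro i hi hiK
  rcases Int.emod_two_eq_zero_or_one (i - K₀) with heven | hodd
  · rcases (by omega : i = K₀ ∨ i = K ∨ K₀ < i ∧ i < K) with rfl | rfl | ⟨hlo, hhi⟩
    · omega
    · omega
    · have := odd (i - 1) (by omega) (by omega) (by omega)
      have := odd (i + 1) (by omega) (by omega) (by omega)
      have := ha (i - 1) (by omega) (by omega)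
      have := ha i (by omega) (by omega)
      have := ha (i + 1) (by omega) (by omega)
      have := h.anti (i - 1) i (by omega) (by omega) hiK
      have := h.anti i (i + 1) (by omega) (by omega) (by omega)
      have := (sep i (i + 1) hi (by omega) (by omega) (by omega)).1
      omega
  · rw [hodd]
    exact odd i (by omega) hiK hodd

end Sequences

namespace StdData

variable {S : StdData} {c : ℤ → ℤ → ℤ}

variable (S) in
def pairSum (c : ℤ → ℤ → ℤ) (j i : ℤ) : ℤ := S.cext c i (2 * j - 2) + S.cext c i (2 * j - 1)

theorem cext_even_eq_aext (hc : S.CondC c) {i j : ℤ} (hi : 1 ≤ i) (hik : i ≤ S.k)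
    (hj : 1 ≤ j) (hjg : j ≤ S.g) : S.cext c i (2 * j - 2) = S.aext i (2 * j - 2) := by
  have := hc.1 i (2 * j - 2) hi hik
  unfold cext aext
  split_ifs <;> first | rfl | omega |
    simpa [Int.odd_iff, show (2 * j - 2) % 2 = 0 by omega] using this (by omega) (by omega)

theorem cext_odd_eq_aext_add (hc : S.CondC c) {i j : ℤ} (hi : 1 ≤ i) (hik : i ≤ S.k)
    (hj : 1 ≤ j) (hjg : j ≤ S.g) :
    S.cext c i (2 * j - 1) = S.aext i (2 * j - 1) + S.N := by
  have := hc.1 i (2 * j - 1) hi hik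
  unfold cext aext
  split_ifs <;> first | omega |
    simpa [Int.odd_iff, show (2 * j - 1) % 2 = 1 by omega] using this (by omega) (by omega) |
    (simp only [lastCol, seqA, k] at hik ⊢; split_ifs; omega)

theorem pairSum_eq_of_le_k (hc : S.CondC c) {i j : ℤ} (hi : 1 ≤ i) (hik : i ≤ S.k)
    (hj : 1 ≤ j) (hjg : j ≤ S.g) :
    S.pairSum c j i = S.aext i (2 * j - 2) + S.aext i (2 * j - 1) + S.N := by
  rw [pairSum, cext_even_eq_aext hc hi hik hj hjg, cext_odd_eq_aext_add hc hi hik hj hjg]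
  ring

theorem cext_succ_eq (hc : S.CondC c) {i j : ℤ} (hi : 1 ≤ i) (hik : i ≤ S.k + S.n)
    (hj : 1 ≤ j) (hjg : j < S.g) :
    S.cext c i (2 * (j + 1) - 2) = S.cext c i (2 * j - 2) + (S.g + S.N - 1) - S.pairSum c j i := by
  have := hc.2.1 i j hi hik hj (by omega)
  rw [show 2 * (j + 1) - 2 = 2 * j by ring]
  unfold pairSum cext
  split_ifs <;> omega

theorem d_eq_of_even (hS : S.Std) {j : ℤ} (hj : 1 ≤ j) (hjg : j ≤ S.g) (hev : Even (S.d j)) :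
    S.d j = 2 * S.g - 2 := by
  obtain ⟨w, hw⟩ := hev
  rcases hS.hd_mem j hj hjg with h | h | h <;> omega

theorem d_two (hS : S.Std) : S.d 2 = 2 * S.g - 1 := by
  simpa [hS.hj_one] using (hS.hd_odd 1 le_rfl hS.hT).1

theorem pairSum_eq_of_even (hS : S.Std) (hc : S.CondC c) {j : ℤ} (hj : 1 ≤ j)
    (hjg : j ≤ S.g) (hev : Even (S.d j)) {i : ℤ} (hki : S.k < i) (hi : i ≤ S.k + S.n) :
    S.pairSum c j i = S.g + S.N - 2 := by
  have hdj := d_eq_of_even hS hj hjg hev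
  have hdhat : S.dhat j / 2 = S.g + S.N - 1 := by unfold dhat; omega
  obtain ⟨⟨i₁, i₂⟩, hp, -⟩ := (hS.hs2 j hj hjg hdj).special
  obtain ⟨hi₁, hi₁₂, hi₂, hs₁, hs₂⟩ := hp
  dsimp only at hi₁ hi₁₂ hi₂ hs₁ hs₂
  have hsp : IsSpecialPair (S.k + S.n) (S.dhat j / 2) (fun i => S.cext c i (2 * j - 2))
      (fun i => S.cext c i (2 * j - 1)) i₁ i₂ := by
    have e₁ := pairSum_eq_of_le_k hc hi₁ (by omega) hj hjg
    have e₂ := pairSum_eq_of_le_k hc (by omega) hi₂ hj hjg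
    unfold pairSum at e₁ e₂
    refine ⟨hi₁, hi₁₂, by unfold n; have := hS.hm; omega, ?_, ?_⟩ <;> dsimp only <;> omega
  have := (hc.2.2.1 j hj hjg hev).sum_eq_pred_of_ne hsp (by omega) hi (by omega) (by omega)
  unfold pairSum
  omega

theorem pairSum_one_eq (hS : S.Std) (hc : S.CondC c) {i : ℤ} (hki : S.k ≤ i)
    (hi : i ≤ S.k + S.n) : S.pairSum c 1 i = S.g + S.N - 2 := by
  have hk1 := hS.hk1
  have hg := hS.hg
  rcases hki.lt_or_eq with hki | rfl
  · exact pairSum_eq_of_even hS hc le_rfl (by omega) ⟨S.g - 1, by rw [hS.hd_one]; ring⟩ hki hi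
  · have hI := hS.hs2 1 le_rfl (by omega) hS.hd_one
    have := hI.sum_eq_pred_of_repeat_succ (i := S.k) (by unfold k; omega) le_rfl
      (by simp [aext, seqA, k]; omega) (by simp [aext, seqA, k]; omega)
    rw [pairSum_eq_of_le_k hc (by unfold k; omega) le_rfl le_rfl (by omega)]
    omega

theorem cext_two_eq (hS : S.Std) (hc : S.CondC c) {i : ℤ} (hki : S.k ≤ i)
    (hi : i ≤ S.k + S.n) : S.cext c i 2 = seqA i + 1 := by
  have hk1 := hS.hk1
  have hstep := cext_succ_eq hc (j := 1) (by unfold k at hki; omega) hi le_rfl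
    (by have := hS.hg; omega)
  have hsum := pairSum_one_eq hS hc hki hi
  norm_num [pairSum, cext] at hstep hsum ⊢
  omega

theorem pairSum_two_eq (hS : S.Std) (hc : S.CondC c) {i : ℤ} (hki : S.k ≤ i)
    (hi : i ≤ S.k + S.n) : S.pairSum c 2 i = S.g + S.N - 1 - (i - S.k) % 2 := by
  have hg := hS.hg
  have hk1 := hS.hk1
  have hm := hS.hm
  have hdhat : (S.dhat 2 - 1) / 2 = S.g + S.N - 1 := by unfold dhat; rw [d_two hS]; omega
  have hII := hc.2.2.2.1 2 (by omega) (by omega) ⟨S.g - 1, by rw [d_two hS]; ring⟩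
  rw [hdhat] at hII
  norm_num at hII
  obtain ⟨p, hp, hpk, hpa, hs₁, hs₂, -, -⟩ :=
    (hS.hs3a 2 (by omega) (by omega) (d_two hS)).exists_istar
  have hcol : ∀ q, 1 ≤ q → q ≤ S.k → S.cext c q 2 = S.aext q 2 ∧
      S.cext c q 3 = S.aext q 3 + S.N := fun q hq hqk => by
    simpa using And.intro (cext_even_eq_aext hc (j := 2) hq hqk (by omega) (by omega))
      (cext_odd_eq_aext_add hc (j := 2) hq hqk (by omega) (by omega))
  norm_num at hpa hs₁ hs₂
  obtain ⟨hp₂, hp₃⟩ := hcol p hp hpk.le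
  obtain ⟨hp₂', hp₃'⟩ := hcol (p + 1) (by omega) hpk
  have hpa' : S.cext c p 2 = S.cext c (p + 1) 2 := by omega
  have hpb' : S.cext c p 3 = S.cext c (p + 1) 3 := by omega
  have hstair : ∀ i, S.k ≤ i → i ≤ S.k + S.n → S.cext c i 2 = S.k1 + 1 + (i - S.k) / 2 :=
    fun i hki hi => by rw [cext_two_eq hS hc hki hi]; unfold seqA k; omega
  have h₀ : S.cext c S.k 2 + S.cext c S.k 3 = S.g + S.N - 1 := by
    obtain ⟨e₂, e₃⟩ := hcol S.k (by unfold k; omega) le_rfl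
    have := hS.hs4
    simp only [aext, show (2 : ℤ) ≠ 2 * S.g - 1 by omega,
      show (3 : ℤ) ≠ 2 * S.g - 1 by omega, if_false] at e₂ e₃
    omega
  have hK : S.cext c (S.k + S.n) 2 + S.cext c (S.k + S.n) 3 = S.g + S.N - 1 := by
    have := hc.2.2.2.2.2
    unfold cext
    split_ifs <;> omega
  have := hII.sum_eq_sub_emod_two_of_staircase (a := fun i => S.cext c i 2)
    (b := fun i => S.cext c i 3) hp hpk (by unfold n; omega) hpa' hpb' hstair h₀ hK i hki hi
  unfold pairSum
  norm_num
  exact this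

theorem pairSum_jpos_eq (hS : S.Std) (hc : S.CondC c) {t : ℤ} (ht : 1 ≤ t)
    (htT : t ≤ 2 * S.T) {i : ℤ} (hki : S.k < i) (hi : i ≤ S.k + S.n) :
    S.pairSum c (S.jpos t) i = (S.dhat (S.jpos t) - 1) / 2 - (i - S.k + t + 1) % 2 := by
  induction t, ht using Int.leInduction with
  | base =>
    have : (S.dhat 2 - 1) / 2 = S.g + S.N - 1 := by unfold dhat; rw [d_two hS]; omega
    rw [hS.hj_one, pairSum_two_eq hS hc hki.le hi]
    omega
  | succ t ht ih =>
    have := ih (by omega)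
    have hC5 := hc.2.2.2.2.1 i t (by omega) hi ht (by omega)
    unfold pairSum at *
    rcases Int.emod_two_eq_zero_or_one (i - S.k + t + 1) with h | h
    · have := hC5.1 (by omega)
      omega
    · have := hC5.2 (by omega)
      omega

theorem jpos_strictMonoOn (hS : S.Std) : StrictMonoOn S.jpos (Set.Icc 1 (2 * S.T)) :=
  fun s hs t ht hst => hS.hj_mono s t hs.1 hst ht.2

theorem oddCountBelow_one (hS : S.Std) : S.oddCountBelow 1 = 0 := by
  rw [oddCountBelow, card_eq_zero, filter_eq_empty_iff]
  intro t ht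
  have := (hS.hj_range t (mem_Icc.1 ht).1 (mem_Icc.1 ht).2).1
  omega

theorem oddCountBelow_succ_of_forall_ne {j : ℤ}
    (hj : ∀ t, 1 ≤ t → t ≤ 2 * S.T → S.jpos t ≠ j) :
    S.oddCountBelow (j + 1) = S.oddCountBelow j := by
  unfold oddCountBelow
  congr 1
  refine filter_congr fun t ht => ?_
  have := hj t (mem_Icc.1 ht).1 (mem_Icc.1 ht).2
  omega

theorem oddCountBelow_jpos (hS : S.Std) {t : ℤ} (ht : 1 ≤ t) (htT : t ≤ 2 * S.T) :
    (S.oddCountBelow (S.jpos t) : ℤ) = t - 1 := by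
  have : (Icc 1 (2 * S.T)).filter (fun s => S.jpos s < S.jpos t) = Icc 1 (t - 1) := by
    ext s
    simp only [mem_filter, mem_Icc]
    constructor
    · rintro ⟨hs, hlt⟩
      exact ⟨hs.1, by have := ((jpos_strictMonoOn hS).lt_iff_lt hs ⟨ht, htT⟩).1 hlt; omega⟩
    · rintro ⟨h₁, h₂⟩
      exact ⟨⟨h₁, by omega⟩,
        ((jpos_strictMonoOn hS).lt_iff_lt ⟨h₁, by omega⟩ ⟨ht, htT⟩).2 (by omega)⟩
  rw [oddCountBelow, this, Int.card_Icc]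
  omega

theorem oddCountBelow_jpos_add_one (hS : S.Std) {t : ℤ} (ht : 1 ≤ t) (htT : t ≤ 2 * S.T) :
    (S.oddCountBelow (S.jpos t + 1) : ℤ) = t := by
  have : (Icc 1 (2 * S.T)).filter (fun s => S.jpos s < S.jpos t + 1) = Icc 1 t := by
    ext s
    simp only [mem_filter, mem_Icc, Int.lt_add_one_iff]
    constructor
    · rintro ⟨hs, hle⟩
      exact ⟨hs.1, ((jpos_strictMonoOn hS).le_iff_le hs ⟨ht, htT⟩).1 hle⟩
    · rintro ⟨h₁, h₂⟩
      exact ⟨⟨h₁, by omega⟩, ((jpos_strictMonoOn hS).le_iff_le ⟨h₁, by omega⟩ ⟨ht, htT⟩).2 h₂⟩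
  rw [oddCountBelow, this, Int.card_Icc]
  omega

theorem exists_cext_eq_add_half (hS : S.Std) (hc : S.CondC c) {j : ℤ} (hj : 1 ≤ j)
    (hjg : j ≤ S.g) : ∃ E, ∀ i, S.k < i → i ≤ S.k + S.n →
      S.cext c i (2 * j - 2) = E + (i - S.k + S.oddCountBelow j) / 2 := by
  induction j, hj using Int.leInduction with
  | base =>
    refine ⟨S.k1, fun i hki hi => ?_⟩
    rw [oddCountBelow_one hS]
    simp only [cext, seqA, k] at hki ⊢
    norm_num
    omega
  | succ j hj ih =>
    obtain ⟨E, hE⟩ := ih (by omega)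
    have step : ∀ i, S.k < i → i ≤ S.k + S.n → S.cext c i (2 * (j + 1) - 2) =
        S.cext c i (2 * j - 2) + (S.g + S.N - 1) - S.pairSum c j i :=
      fun i hki hi => cext_succ_eq hc (by unfold k at hki; have := hS.hk1; omega) hi hj (by omega)
    by_cases hodd : Odd (S.d j)
    · obtain ⟨t, ht, htT, rfl⟩ := (hS.hodd_iff _ hj (by omega)).1 hodd
      refine ⟨E + (S.g + S.N - 1) - (S.dhat (S.jpos t) - 1) / 2, fun i hki hi => ?_⟩
      rw [step i hki hi, hE i hki hi, pairSum_jpos_eq hS hc ht htT hki hi,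
        oddCountBelow_jpos hS ht htT, oddCountBelow_jpos_add_one hS ht htT]
      omega
    · have hocb := oddCountBelow_succ_of_forall_ne fun t ht htT e =>
        hodd ((hS.hodd_iff j hj (by omega)).2 ⟨t, ht, htT, e⟩)
      refine ⟨E + 1, fun i hki hi => ?_⟩
      rw [step i hki hi, hE i hki hi,
        pairSum_eq_of_even hS hc hj (by omega) (Int.not_odd_iff_even.1 hodd) hki hi, hocb]
      omega

end StdData

open StdData in
/-- Lemma A.4 of the appendix: let `c` satisfy (C1)–(C6) and let `j ∈ {1,…,g}` with `dⱼ`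
even.  Writing `e = c_{k+1,2j−2}` and `f = c_{k+1,2j−1}`, if the number of indices `t`
with `jₜ < j` is even then the last `n = 2m` entries of columns `2j−2` and `2j−1` are
`(e, e+1, e+1, …, e+m−1, e+m−1, e+m)` and `(f, f−1, f−1, …, f−m+1, f−m+1, f−m)`
respectively, and if that number is odd they are
`(e, e, e+1, e+1, …, e+m−1, e+m−1)` and `(f, f, f−1, f−1, …, f−m+1, f−m+1)`; the `r`-th
of these entries (`1 ≤ r ≤ n`, row `k + r`) is expressed by the closed formulas below. -/
theorem condC_evenDegree_column_pattern (S : StdData) (hS : S.Std) (c : ℤ → ℤ → ℤ)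
    (hc : S.CondC c) (j : ℤ) (hj1 : 1 ≤ j) (hj2 : j ≤ S.g) (hev : Even (S.d j)) :
    ∀ r, 1 ≤ r → r ≤ S.n →
      (Even (S.oddCountBelow j) →
        S.cext c (S.k + r) (2 * j - 2) = S.cext c (S.k + 1) (2 * j - 2) + r / 2 ∧
        S.cext c (S.k + r) (2 * j - 1) = S.cext c (S.k + 1) (2 * j - 1) - r / 2) ∧
      (Odd (S.oddCountBelow j) →
        S.cext c (S.k + r) (2 * j - 2) = S.cext c (S.k + 1) (2 * j - 2) + (r - 1) / 2 ∧
        S.cext c (S.k + r) (2 * j - 1) = S.cext c (S.k + 1) (2 * j - 1) - (r - 1) / 2) := by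
  intro r hr hrn
  obtain ⟨E, hE⟩ := exists_cext_eq_add_half hS hc hj1 hj2
  have hA := hE (S.k + r) (by omega) (by omega)
  have hA₁ := hE (S.k + 1) (by omega) (by omega)
  have hs := pairSum_eq_of_even hS hc hj1 hj2 hev (i := S.k + r) (by omega) (by omega)
  have hs₁ := pairSum_eq_of_even hS hc hj1 hj2 hev (i := S.k + 1) (by omega) (by omega)
  unfold pairSum at hs hs₁
  constructor <;> rintro ⟨o, ho⟩ <;> rw [ho] at hA hA₁ <;> push_cast at hA hA₁ <;> omega

end BFM
end
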